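/- arXiv:2505.01687 — 2 statements merged into one kernel-verified Lean document; each statement's English description precedes it below -/
import Mathlib

section
/- Let X and Y be independent exponential random variables with rate 1, let p_V, L_V, p_I, L_I, σ², D, B, τ₀ > 0, and define γ = (p_V L_V X)/(p_I L_I Y + σ²) and the delay τ = D/(B log₂(1+γ)). Then the hazard rate Λ(τ₀) = lim_{Δτ→0⁺} P{τ₀ ≤ τ ≤ τ₀+Δτ} / (Δτ · P{τ ≥ τ₀}) exists and equals D_V · e^{−a γ_V} · (b + a(1 + b γ_V)) / [(1 + b γ_V)(1 + b γ_V − e^{−a γ_V})], where a = σ²/(p_V L_V), b = p_I L_I/(p_V L_V), γ_V = 2^{D/(Bτ₀)} − 1, and D_V = (ln 2 · D · 2^{D/(Bτ₀)})/(B τ₀²). -/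
/-!
Conditioning on the interference fading `Y`, the SINR `γ = c X / (d Y + e)` exceeds `s` with
probability `E[exp (-s (d Y + e) / c)] = exp (-a s) E[exp (-b s Y)] = exp (-a s) / (1 + b s)`,
where `a = e / c` and `b = d / c`. The delay is a strictly decreasing function of `γ`, and it
equals `t` exactly when `γ = 2 ^ (D / (B t)) - 1`; hence `F t = P {τ ≤ t} = P {γ ≥ 2 ^ (D / (B t)) - 1}`
is known in closed form and differentiable. The window `{τ₀ ≤ τ ≤ τ₀ + Δτ}` has probability
`F (τ₀ + Δτ) - F τ₀`, so the hazard rate is `F' τ₀ / (1 - F τ₀)`, computed by the chain rule.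
-/

open MeasureTheory ProbabilityTheory Real Filter Topology Set

namespace ProbabilityTheory

variable {r : ℝ}

instance : NullSingletonClass (expMeasure r) := by
  unfold expMeasure gammaMeasure; infer_instance

instance : IsProbabilityMeasure (expMeasure 1) := isProbabilityMeasure_expMeasure one_pos

lemma expMeasure_Ioi (hr : 0 < r) {c : ℝ} (hc : 0 ≤ c) :
    expMeasure r (Ioi c) = ENNReal.ofReal (exp (-(r * c))) := by
  have := isProbabilityMeasure_expMeasure hr
  have hexp : exp (-(r * c)) ≤ 1 := exp_le_one_iff.mpr (neg_nonpos.mpr (by positivity))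
  rw [← compl_Iic, prob_compl_eq_one_sub measurableSet_Iic, ← ofReal_cdf,
    cdf_expMeasure_eq hr, if_pos hc, ← ENNReal.ofReal_one,
    ← ENNReal.ofReal_sub _ (sub_nonneg.mpr hexp), sub_sub_cancel]

lemma ae_pos_expMeasure (hr : 0 < r) : ∀ᵐ x ∂expMeasure r, 0 < x := by
  have := isProbabilityMeasure_expMeasure hr
  refine ae_iff.mpr (measure_mono_null (fun x hx ↦ not_lt.mp hx) (t := Iic 0) ?_)
  rw [← ofReal_cdf, cdf_expMeasure_eq hr, if_pos le_rfl, mul_zero, neg_zero, exp_zero, sub_self,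
    ENNReal.ofReal_zero]

lemma lintegral_exp_neg_mul_expMeasure (hr : 0 < r) {k : ℝ} (hrk : 0 < r + k) :
    ∫⁻ y, ENNReal.ofReal (exp (-(k * y))) ∂expMeasure r = ENNReal.ofReal (r / (r + k)) := by
  have hpdf : Measurable (exponentialPDF r) := (measurable_exponentialPDFReal r).ennreal_ofReal
  have hdensity : ∀ y, exponentialPDF r y * ENNReal.ofReal (exp (-(k * y))) =
      (Ici 0).indicator (fun y ↦ ENNReal.ofReal (r * exp (-(r + k) * y))) y := by
    intro y
    rcases lt_or_ge y 0 with hy | hy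
    · simp [exponentialPDF_of_neg hy, hy]
    · rw [exponentialPDF_of_nonneg hy, indicator_of_mem (mem_Ici.mpr hy),
        ← ENNReal.ofReal_mul (by positivity), mul_assoc, ← exp_add]
      ring_nf
  have hint : IntegrableOn (fun y ↦ r * exp (-(r + k) * y)) (Ici 0) :=
    (integrableOn_Ici_iff_integrableOn_Ioi).mpr
      ((exp_neg_integrableOn_Ioi 0 hrk).const_mul r)
  calc ∫⁻ y, ENNReal.ofReal (exp (-(k * y))) ∂expMeasure r
      = ∫⁻ y in Ici 0, ENNReal.ofReal (r * exp (-(r + k) * y)) := by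
        rw [show expMeasure r = volume.withDensity (exponentialPDF r) from rfl,
          lintegral_withDensity_eq_lintegral_mul _ hpdf (by fun_prop),
          ← lintegral_indicator measurableSet_Ici]
        exact lintegral_congr hdensity
    _ = ENNReal.ofReal (∫ y in Ioi 0, r * exp (-(r + k) * y)) := by
        rw [← integral_Ici_eq_integral_Ioi, ofReal_integral_eq_lintegral_ofReal hint
          (ae_of_all _ fun y ↦ by positivity)]
    _ = ENNReal.ofReal (r / (r + k)) := by
        rw [integral_const_mul, integral_exp_mul_Ioi (by linarith), mul_zero, exp_zero]
        congr 1
        field_simp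

lemma IndepFun.measure_mem_eq_lintegral_map {Ω α β : Type*} [MeasurableSpace Ω]
    [MeasurableSpace α] [MeasurableSpace β] {P : Measure Ω} [IsFiniteMeasure P]
    {X : Ω → α} {Y : Ω → β} (hX : AEMeasurable X P) (hY : AEMeasurable Y P)
    (hXY : IndepFun X Y P) {s : Set (α × β)} (hs : MeasurableSet s) :
    P {ω | (X ω, Y ω) ∈ s} = ∫⁻ x, P.map Y (Prod.mk x ⁻¹' s) ∂P.map X := by
  rw [← Measure.prod_apply hs, ← hXY.map_prod_eq_prod_map_map hX hY,
    Measure.map_apply₀ (hX.prodMk hY) hs.nullMeasurableSet]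
  rfl

lemma tendsto_hazard_of_hasDerivAt {Ω : Type*} [MeasurableSpace Ω] {P : Measure Ω}
    [IsProbabilityMeasure P] {T : Ω → ℝ} (hT : AEMeasurable T P) {F : ℝ → ℝ} {t₀ F' : ℝ}
    (hlt : P.real {ω | T ω < t₀} = F t₀) (hle : ∀ t > t₀, P.real {ω | T ω ≤ t} = F t)
    (hF : HasDerivAt F F' t₀) :
    Tendsto (fun Δ ↦ P.real {ω | t₀ ≤ T ω ∧ T ω ≤ t₀ + Δ} / (Δ * P.real {ω | t₀ ≤ T ω}))
      (𝓝[>] 0) (𝓝 (F' / (1 - F t₀))) := by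
  have hnull : NullMeasurableSet {ω | T ω < t₀} P := nullMeasurableSet_lt hT aemeasurable_const
  have hsurvival : P.real {ω | t₀ ≤ T ω} = 1 - F t₀ := by
    rw [← hlt, ← probReal_compl_eq_one_sub₀ hnull]
    simp only [compl_ofPred, not_lt]
  have hwindow : ∀ Δ > 0, P.real {ω | t₀ ≤ T ω ∧ T ω ≤ t₀ + Δ} = F (t₀ + Δ) - F t₀ := by
    intro Δ hΔ
    have hsub : {ω | T ω < t₀} ⊆ {ω | T ω ≤ t₀ + Δ} := fun ω (h : T ω < t₀) ↦
      (h.trans (lt_add_of_pos_right t₀ hΔ)).le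
    have hdiff : {ω | t₀ ≤ T ω ∧ T ω ≤ t₀ + Δ} = {ω | T ω ≤ t₀ + Δ} \ {ω | T ω < t₀} := by
      ext ω; simp [and_comm]
    rw [hdiff, measureReal_def, measure_sdiff hsub hnull (measure_ne_top _ _),
      ENNReal.toReal_sub_of_le (measure_mono hsub) (measure_ne_top _ _), ← measureReal_def,
      ← measureReal_def, hle _ (by linarith), hlt]
  refine (hF.tendsto_slope_zero_right.div_const (1 - F t₀)).congr' ?_
  filter_upwards [self_mem_nhdsWithin] with Δ hΔ
  rw [hwindow Δ hΔ, hsurvival, smul_eq_mul, inv_mul_eq_div, div_div]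

end ProbabilityTheory

noncomputable def delay (D B γ : ℝ) : ℝ := D / (B * logb 2 (1 + γ))

noncomputable def requiredSINR (D B t : ℝ) : ℝ := (2 : ℝ) ^ (D / (B * t)) - 1

lemma measurable_delay (D B : ℝ) : Measurable (delay D B) := by
  unfold delay logb; fun_prop

lemma strictAntiOn_delay {D B : ℝ} (hD : 0 < D) (hB : 0 < B) :
    StrictAntiOn (delay D B) (Ioi 0) := by
  intro x hx y hy hxy
  have hlogx : 0 < logb 2 (1 + x) := logb_pos one_lt_two (by linarith [mem_Ioi.mp hx])
  have hlog : logb 2 (1 + x) < logb 2 (1 + y) :=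
    logb_lt_logb one_lt_two (by linarith [mem_Ioi.mp hx]) (by linarith)
  exact div_lt_div_of_pos_left hD (by positivity) (by gcongr)

lemma delay_requiredSINR {D B t : ℝ} (hD : D ≠ 0) (hB : B ≠ 0) (ht : t ≠ 0) :
    delay D B (requiredSINR D B t) = t := by
  rw [delay, requiredSINR, add_sub_cancel, logb_rpow two_pos (by norm_num)]
  field_simp

lemma requiredSINR_pos {D B t : ℝ} (hD : 0 < D) (hB : 0 < B) (ht : 0 < t) :
    0 < requiredSINR D B t :=
  sub_pos.mpr (one_lt_rpow one_lt_two (by positivity))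

lemma hasDerivAt_requiredSINR {D B t : ℝ} (hB : B ≠ 0) (ht : t ≠ 0) :
    HasDerivAt (requiredSINR D B) (-(log 2 * D * (2 : ℝ) ^ (D / (B * t)) / (B * t ^ 2))) t := by
  have hexponent : HasDerivAt (fun t ↦ D / (B * t)) (-(D / (B * t ^ 2))) t := by
    have := (hasDerivAt_inv ht).const_mul (D / B)
    rw [show (fun y ↦ D / B * y⁻¹) = fun t ↦ D / (B * t) by funext; field_simp] at this
    exact this.congr_deriv (by field_simp)
  exact ((hexponent.const_rpow two_pos).sub_const 1).congr_deriv (by ring)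

noncomputable def sinrCCDF (a b s : ℝ) : ℝ := exp (-(a * s)) / (1 + b * s)

lemma sinrCCDF_nonneg {a b s : ℝ} (hb : 0 ≤ b) (hs : 0 ≤ s) : 0 ≤ sinrCCDF a b s := by
  unfold sinrCCDF; positivity

lemma hasDerivAt_sinrCCDF {a b s : ℝ} (hs : 1 + b * s ≠ 0) :
    HasDerivAt (sinrCCDF a b) (-(exp (-(a * s)) * (a * (1 + b * s) + b) / (1 + b * s) ^ 2)) s := by
  have hnum : HasDerivAt (fun s ↦ exp (-(a * s))) (-(a * exp (-(a * s)))) s := by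
    simpa [mul_comm] using ((hasDerivAt_id' s).const_mul a).neg.exp
  have hden : HasDerivAt (fun s ↦ 1 + b * s) b s := by
    simpa using ((hasDerivAt_id' s).const_mul b).const_add 1
  exact (hnum.div hden hs).congr_deriv (by ring)

lemma hazard_sinrCCDF {a b s κ : ℝ} (ha : 0 < a) (hb : 0 ≤ b) (hs : 0 < s) :
    -(exp (-(a * s)) * (a * (1 + b * s) + b) / (1 + b * s) ^ 2) * -κ / (1 - sinrCCDF a b s)
      = κ * exp (-(a * s)) * (b + a * (1 + b * s)) / ((1 + b * s) * (1 + b * s - exp (-(a * s)))) := by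
  have hexp : exp (-(a * s)) < 1 := exp_lt_one_iff.mpr (neg_lt_zero.mpr (by positivity))
  have hbs : 0 ≤ b * s := by positivity
  have : 0 < 1 + b * s - exp (-(a * s)) := by linarith
  rw [sinrCCDF]
  field_simp
  ring

lemma lintegral_expMeasure_Ioi_affine {a b s : ℝ} (ha : 0 ≤ a) (hb : 0 ≤ b) (hs : 0 ≤ s) :
    ∫⁻ y, expMeasure 1 (Ioi (s * (b * y + a))) ∂expMeasure 1 = ENNReal.ofReal (sinrCCDF a b s) :=
  calc ∫⁻ y, expMeasure 1 (Ioi (s * (b * y + a))) ∂expMeasure 1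
      = ∫⁻ y, ENNReal.ofReal (exp (-(a * s))) * ENNReal.ofReal (exp (-(b * s * y)))
          ∂expMeasure 1 := by
        refine lintegral_congr_ae ?_
        filter_upwards [ae_pos_expMeasure one_pos] with y hy
        rw [expMeasure_Ioi one_pos (by positivity), ← ENNReal.ofReal_mul (exp_nonneg _),
          ← exp_add]
        ring_nf
    _ = ENNReal.ofReal (sinrCCDF a b s) := by
        rw [lintegral_const_mul _ (by fun_prop),
          lintegral_exp_neg_mul_expMeasure one_pos (by positivity),
          ← ENNReal.ofReal_mul (exp_nonneg _), sinrCCDF, mul_div, mul_one, add_comm]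

lemma lintegral_expMeasure_Ici_affine {a b s : ℝ} (ha : 0 ≤ a) (hb : 0 ≤ b) (hs : 0 ≤ s) :
    ∫⁻ y, expMeasure 1 (Ici (s * (b * y + a))) ∂expMeasure 1 = ENNReal.ofReal (sinrCCDF a b s) := by
  simp_rw [← measure_congr Ioi_ae_eq_Ici]
  exact lintegral_expMeasure_Ioi_affine ha hb hs

section IIDExponential

variable {Ω : Type*} [MeasurableSpace Ω] {P : Measure Ω} {X Y : Ω → ℝ}

lemma aemeasurable_of_map_eq_expMeasure (hX : P.map X = expMeasure 1) : AEMeasurable X P :=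
  .of_map_ne_zero (by rw [hX]; exact IsProbabilityMeasure.ne_zero _)

lemma ae_pos_of_map_eq_expMeasure (hX : P.map X = expMeasure 1) : ∀ᵐ ω ∂P, 0 < X ω :=
  ae_of_ae_map (aemeasurable_of_map_eq_expMeasure hX) (hX ▸ ae_pos_expMeasure one_pos)

variable [IsProbabilityMeasure P] (hXY : IndepFun X Y P) (hX : P.map X = expMeasure 1)
  (hY : P.map Y = expMeasure 1)
include hXY hX hY

lemma measure_lt_sinr {c d e s : ℝ} (hc : 0 < c) (hd : 0 ≤ d) (he : 0 < e) (hs : 0 ≤ s) :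
    P {ω | s < c * X ω / (d * Y ω + e)} = ENNReal.ofReal (sinrCCDF (e / c) (d / c) s) := by
  have hevent : {ω | s < c * X ω / (d * Y ω + e)}
      =ᵐ[P] {ω | (Y ω, X ω) ∈ {p : ℝ × ℝ | s * (d / c * p.1 + e / c) < p.2}} := by
    filter_upwards [ae_pos_of_map_eq_expMeasure hY] with ω hω
    change (s < c * X ω / (d * Y ω + e)) = (s * (d / c * Y ω + e / c) < X ω)
    rw [lt_div_iff₀ (by positivity), ← div_lt_iff₀' hc, mul_div_assoc, add_div, mul_div_right_comm]
  rw [measure_congr hevent, hXY.symm.measure_mem_eq_lintegral_map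
    (aemeasurable_of_map_eq_expMeasure hY) (aemeasurable_of_map_eq_expMeasure hX)
    (measurableSet_lt (by fun_prop) measurable_snd), hX, hY]
  exact lintegral_expMeasure_Ioi_affine (by positivity) (by positivity) hs

lemma measure_le_sinr {c d e s : ℝ} (hc : 0 < c) (hd : 0 ≤ d) (he : 0 < e) (hs : 0 ≤ s) :
    P {ω | s ≤ c * X ω / (d * Y ω + e)} = ENNReal.ofReal (sinrCCDF (e / c) (d / c) s) := by
  have hevent : {ω | s ≤ c * X ω / (d * Y ω + e)}
      =ᵐ[P] {ω | (Y ω, X ω) ∈ {p : ℝ × ℝ | s * (d / c * p.1 + e / c) ≤ p.2}} := by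
    filter_upwards [ae_pos_of_map_eq_expMeasure hY] with ω hω
    change (s ≤ c * X ω / (d * Y ω + e)) = (s * (d / c * Y ω + e / c) ≤ X ω)
    rw [le_div_iff₀ (by positivity), ← div_le_iff₀' hc, mul_div_assoc, add_div, mul_div_right_comm]
  rw [measure_congr hevent, hXY.symm.measure_mem_eq_lintegral_map
    (aemeasurable_of_map_eq_expMeasure hY) (aemeasurable_of_map_eq_expMeasure hX)
    (measurableSet_le (by fun_prop) measurable_snd), hX, hY]
  exact lintegral_expMeasure_Ici_affine (by positivity) (by positivity) hs

lemma measureReal_delay_lt {c d e D B t : ℝ} (hc : 0 < c) (hd : 0 ≤ d) (he : 0 < e)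
    (hD : 0 < D) (hB : 0 < B) (ht : 0 < t) :
    P.real {ω | delay D B (c * X ω / (d * Y ω + e)) < t}
      = sinrCCDF (e / c) (d / c) (requiredSINR D B t) := by
  have hγt := requiredSINR_pos hD hB ht
  have hevent : {ω | delay D B (c * X ω / (d * Y ω + e)) < t}
      =ᵐ[P] {ω | requiredSINR D B t < c * X ω / (d * Y ω + e)} := by
    filter_upwards [ae_pos_of_map_eq_expMeasure hX, ae_pos_of_map_eq_expMeasure hY] with ω hx hy
    have hmono := (strictAntiOn_delay hD hB).lt_iff_gt (a := c * X ω / (d * Y ω + e))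
      (mem_Ioi.mpr (by positivity)) (mem_Ioi.mpr hγt)
    rw [delay_requiredSINR hD.ne' hB.ne' ht.ne'] at hmono
    exact propext hmono
  rw [measureReal_def, measure_congr hevent, measure_lt_sinr hXY hX hY hc hd he hγt.le,
    ENNReal.toReal_ofReal (sinrCCDF_nonneg (by positivity) hγt.le)]

lemma measureReal_delay_le {c d e D B t : ℝ} (hc : 0 < c) (hd : 0 ≤ d) (he : 0 < e)
    (hD : 0 < D) (hB : 0 < B) (ht : 0 < t) :
    P.real {ω | delay D B (c * X ω / (d * Y ω + e)) ≤ t}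
      = sinrCCDF (e / c) (d / c) (requiredSINR D B t) := by
  have hγt := requiredSINR_pos hD hB ht
  have hevent : {ω | delay D B (c * X ω / (d * Y ω + e)) ≤ t}
      =ᵐ[P] {ω | requiredSINR D B t ≤ c * X ω / (d * Y ω + e)} := by
    filter_upwards [ae_pos_of_map_eq_expMeasure hX, ae_pos_of_map_eq_expMeasure hY] with ω hx hy
    have hmono := (strictAntiOn_delay hD hB).le_iff_ge (a := c * X ω / (d * Y ω + e))
      (mem_Ioi.mpr (by positivity)) (mem_Ioi.mpr hγt)
    rw [delay_requiredSINR hD.ne' hB.ne' ht.ne'] at hmono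
    exact propext hmono
  rw [measureReal_def, measure_congr hevent, measure_le_sinr hXY hX hY hc hd he hγt.le,
    ENNReal.toReal_ofReal (sinrCCDF_nonneg (by positivity) hγt.le)]

end IIDExponential

/-- For independent rate-1 exponential `X, Y`, SINR
`γ = pV LV X / (pI LI Y + σ²)` and delay `τ = D / (B log₂ (1 + γ))`, the hazard rate
`Λ(τ₀) = lim_{Δτ→0⁺} P{τ₀ ≤ τ ≤ τ₀ + Δτ} / (Δτ · P{τ ≥ τ₀})` exists and equals
`D_V e^{−a γ_V} (b + a(1 + b γ_V)) / ((1 + b γ_V)(1 + b γ_V − e^{−a γ_V}))`. -/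
theorem hazard_rate_v2v
    {Ω : Type*} [MeasurableSpace Ω] (P : Measure Ω) [IsProbabilityMeasure P]
    (X Y : Ω → ℝ) (hXY : IndepFun X Y P)
    (hX : Measure.map X P = expMeasure 1) (hY : Measure.map Y P = expMeasure 1)
    (pV LV pI LI σ2 D B τ0 : ℝ)
    (hpV : 0 < pV) (hLV : 0 < LV) (hpI : 0 < pI) (hLI : 0 < LI) (hσ2 : 0 < σ2)
    (hD : 0 < D) (hB : 0 < B) (hτ0 : 0 < τ0)
    -- the SINR and the delay
    (γ : Ω → ℝ) (hγ : γ = fun ω => pV * LV * X ω / (pI * LI * Y ω + σ2))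
    (τ : Ω → ℝ) (hτ : τ = fun ω => D / (B * Real.logb 2 (1 + γ ω)))
    -- abbreviations
    (A b' γV DV : ℝ)
    (hA : A = σ2 / (pV * LV)) (hb' : b' = pI * LI / (pV * LV))
    (hγV : γV = (2 : ℝ) ^ (D / (B * τ0)) - 1)
    (hDV : DV = Real.log 2 * D * (2 : ℝ) ^ (D / (B * τ0)) / (B * τ0 ^ 2)) :
    Tendsto
      (fun Δτ : ℝ =>
        (P {ω | τ0 ≤ τ ω ∧ τ ω ≤ τ0 + Δτ}).toReal
          / (Δτ * (P {ω | τ0 ≤ τ ω}).toReal))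
      (𝓝[>] 0)
      (𝓝 (DV * Real.exp (-(A * γV)) * (b' + A * (1 + b' * γV))
        / ((1 + b' * γV) * (1 + b' * γV - Real.exp (-(A * γV)))))) := by
  replace hτ : τ = fun ω ↦ delay D B (γ ω) := hτ
  replace hγV : γV = requiredSINR D B τ0 := hγV
  subst hτ hγ hA hb'
  simp only [← measureReal_def]
  have hγV_pos : 0 < γV := hγV ▸ requiredSINR_pos hD hB hτ0
  have hT : AEMeasurable (fun ω ↦ delay D B (pV * LV * X ω / (pI * LI * Y ω + σ2))) P := by
    have := aemeasurable_of_map_eq_expMeasure hX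
    have := aemeasurable_of_map_eq_expMeasure hY
    exact (measurable_delay D B).comp_aemeasurable (by fun_prop)
  have hderiv := (hasDerivAt_sinrCCDF (a := σ2 / (pV * LV))
    (show 1 + pI * LI / (pV * LV) * requiredSINR D B τ0 ≠ 0 by rw [← hγV]; positivity)).comp τ0
    (hasDerivAt_requiredSINR (D := D) hB.ne' hτ0.ne')
  convert tendsto_hazard_of_hasDerivAt hT
    (measureReal_delay_lt hXY hX hY (by positivity) (by positivity) hσ2 hD hB hτ0)
    (fun t ht ↦ measureReal_delay_le hXY hX hY (by positivity) (by positivity) hσ2 hD hB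
      (hτ0.trans ht)) hderiv using 2
  rw [← hγV, ← hDV, hazard_sinrCCDF (by positivity) (by positivity) hγV_pos]
end

section
/- Let λ > 0 and D > 0, and define û(x) = −(ln D)/(λx) + (1/(λx) − x)·ln(x + √(x² + D²)) for x > 0. If for all x > 0 the condition x/√(x² + D²) − ln((x + √(x² + D²))/D) − λx²·ln(x + √(x² + D²)) ≤ 0 holds, then û is antitone on (0, ∞), i.e. for all 0 < x₁ ≤ x₂ one has û(x₂) ≤ û(x₁). Equivalently, the function c ↦ û(1/c) is monotonically increasing on (0, ∞). -/
open Real Set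

/-!
With `L(x) = log (x + √(x² + D²))` one has `L'(x) = 1 / √(x² + D²)`, and differentiating
`û(x) = (L(x) - log D) / (λx) - x L(x)` gives
`λx² û'(x) = x/√(x² + D²) - log ((x + √(x² + D²)) / D) - λx² L(x) - λx³/√(x² + D²)`.
The first three terms form the hypothesis, which is `≤ 0`, and `λx³/√(x² + D²) > 0`, so
`û' ≤ 0` on `(0, ∞)`. Composing with the decreasing map `c ↦ 1 / c` gives the second claim.
-/

theorem add_sqrt_sq_add_sq_pos {D : ℝ} (hD : D ≠ 0) (x : ℝ) : 0 < x + √(x ^ 2 + D ^ 2) := by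
  have : |x| < √(x ^ 2 + D ^ 2) := by
    rw [lt_sqrt (abs_nonneg x), sq_abs]
    exact lt_add_of_pos_right _ (by positivity)
  linarith [neg_abs_le x]

theorem hasDerivAt_log_add_sqrt_sq_add_sq {D : ℝ} (hD : D ≠ 0) (x : ℝ) :
    HasDerivAt (fun y => log (y + √(y ^ 2 + D ^ 2))) (1 / √(x ^ 2 + D ^ 2)) x := by
  have hxs := add_sqrt_sq_add_sq_pos hD x
  refine (((hasDerivAt_id x).add (((hasDerivAt_pow 2 x).add_const (D ^ 2)).sqrt
    (by positivity))).log hxs.ne').congr_deriv ?_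
  simp only [Pi.add_apply, id_eq]
  field_simp
  ring

theorem hasDerivAt_uhat {lam D x : ℝ} (hlam : lam ≠ 0) (hD : D ≠ 0) (hx : x ≠ 0) :
    HasDerivAt
      (fun y => -log D / (lam * y) + (1 / (lam * y) - y) * log (y + √(y ^ 2 + D ^ 2)))
      ((x / √(x ^ 2 + D ^ 2) - log ((x + √(x ^ 2 + D ^ 2)) / D)
        - lam * x ^ 2 * log (x + √(x ^ 2 + D ^ 2)) - lam * x ^ 3 / √(x ^ 2 + D ^ 2))
        / (lam * x ^ 2)) x := by
  have hlin : HasDerivAt (fun y => lam * y) lam x := by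
    simpa using (hasDerivAt_id x).const_mul lam
  have hlx : lam * x ≠ 0 := mul_ne_zero hlam hx
  refine (((hasDerivAt_const x (-log D)).div hlin hlx).add
    ((((hasDerivAt_const x 1).div hlin hlx).sub (hasDerivAt_id x)).mul
      (hasDerivAt_log_add_sqrt_sq_add_sq hD x))).congr_deriv ?_
  simp only [Pi.div_apply, Pi.sub_apply, id_eq]
  rw [log_div (add_sqrt_sq_add_sq_pos hD x).ne' hD]
  field_simp
  ring

theorem antitoneOn_Ioi_of_hasDerivAt_nonpos {a : ℝ} {f f' : ℝ → ℝ}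
    (hf : ∀ x ∈ Ioi a, HasDerivAt f (f' x) x) (hf' : ∀ x ∈ Ioi a, f' x ≤ 0) :
    AntitoneOn f (Ioi a) := by
  refine antitoneOn_of_hasDerivWithinAt_nonpos (f' := f') (convex_Ioi a)
    (fun x hx => (hf x hx).continuousAt.continuousWithinAt) ?_ ?_ <;> rw [interior_Ioi]
  · exact fun x hx => (hf x hx).hasDerivWithinAt
  · exact hf'

/-- For `λ, D > 0`, let
`û(x) = −(ln D)/(λx) + (1/(λx) − x) ln(x + √(x² + D²))`. If for all `x > 0`
`x/√(x² + D²) − ln((x + √(x² + D²))/D) − λx² ln(x + √(x² + D²)) ≤ 0`,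
then `û` is antitone on `(0, ∞)`; equivalently, `c ↦ û(1/c)` is monotone on `(0, ∞)`. -/
theorem uhat_antitoneOn
    (lam D : ℝ) (hlam : 0 < lam) (hD : 0 < D)
    (uhat : ℝ → ℝ)
    (huhat : uhat = fun x =>
      -(Real.log D) / (lam * x)
        + (1 / (lam * x) - x) * Real.log (x + Real.sqrt (x ^ 2 + D ^ 2)))
    (hcond : ∀ x : ℝ, 0 < x →
      x / Real.sqrt (x ^ 2 + D ^ 2)
        - Real.log ((x + Real.sqrt (x ^ 2 + D ^ 2)) / D)
        - lam * x ^ 2 * Real.log (x + Real.sqrt (x ^ 2 + D ^ 2)) ≤ 0) :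
    AntitoneOn uhat (Set.Ioi (0 : ℝ))
      ∧ MonotoneOn (fun c => uhat (1 / c)) (Set.Ioi (0 : ℝ)) := by
  subst huhat
  have hanti := antitoneOn_Ioi_of_hasDerivAt_nonpos
    (fun x (hx : 0 < x) => hasDerivAt_uhat hlam.ne' hD.ne' hx.ne') fun x (hx : 0 < x) => by
      have hcorr : 0 ≤ lam * x ^ 3 / √(x ^ 2 + D ^ 2) := by positivity
      exact div_nonpos_of_nonpos_of_nonneg (by linarith [hcond x hx]) (by positivity)
  exact ⟨hanti, hanti.comp (f := fun c => 1 / c)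
    (fun _ ha _ _ hab => one_div_le_one_div_of_le ha hab) fun c (hc : 0 < c) => one_div_pos.2 hc⟩
end
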